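/- arXiv:1103.1403 — 3 statements merged into one kernel-verified Lean document; each statement's English description precedes it below -/
import Mathlib

section
/- The stationary full-state probability φ(m) = (α₀α^{m-1}/β^m)/(1+(α₀/β)Σ_{l=0}^{m-1}(α/β)^l) is strictly decreasing in β (for fixed α₀, α > 0 and m ≥ 1). -/
open Finset

/-! Clearing the powers of `β` from the fraction gives
`φ(β) = α₀ α^(m-1) / (β^m + α₀ ∑_{l<m} α^l β^(m-1-l))`, a positive constant over a denominator
which, for `m ≥ 1`, is a sum of the strictly increasing `β^m` and terms nondecreasing in `β > 0`. -/

lemma pow_succ_mul_one_add_div_mul_sum {K : Type*} [Field K] {β : K} (hβ : β ≠ 0) (a₀ a : K)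
    (n : ℕ) :
    β ^ (n + 1) * (1 + a₀ / β * ∑ l ∈ range (n + 1), (a / β) ^ l)
      = β ^ (n + 1) + a₀ * ∑ l ∈ range (n + 1), a ^ l * β ^ (n - l) := by
  rw [mul_add, mul_one, ← mul_assoc, mul_sum, mul_sum]
  congr 1
  refine sum_congr rfl fun l hl => ?_
  rw [div_pow, pow_succ', ← pow_mul_pow_sub β (Nat.lt_succ_iff.mp (mem_range.mp hl))]
  field_simp

lemma strictMonoOn_pow_add_mul_sum_mul_pow {K : Type*} [Field K] [LinearOrder K]
    [IsStrictOrderedRing K] {a₀ a : K} (ha₀ : 0 ≤ a₀) (ha : 0 ≤ a) (n : ℕ) :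
    StrictMonoOn (fun β : K => β ^ (n + 1) + a₀ * ∑ l ∈ range (n + 1), a ^ l * β ^ (n - l))
      (Set.Ici 0) := by
  refine (pow_left_strictMonoOn₀ n.succ_ne_zero).add_monotone fun x (hx : 0 ≤ x) _ _ hxy => ?_
  gcongr

lemma StrictMonoOn.strictAntiOn_const_div {α K : Type*} [Preorder α] [Field K] [LinearOrder K]
    [IsStrictOrderedRing K] {s : Set α} {f : α → K} (hf : StrictMonoOn f s)
    (hpos : ∀ x ∈ s, 0 < f x) {c : K} (hc : 0 < c) :
    StrictAntiOn (fun x => c / f x) s :=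
  fun x hx _ hy hxy => div_lt_div_of_pos_left hc (hpos x hx) (hf hx hy hxy)

theorem stmt7 (m : ℕ) (hm : 1 ≤ m) (α₀ α : ℝ) (hα₀ : 0 < α₀) (hα : 0 < α) :
    StrictAntiOn
      (fun β : ℝ => (α₀ * α^(m-1) / β^m) / (1 + (α₀/β) * ∑ l ∈ range m, (α/β)^l))
      (Set.Ioc 0 1) := by
  obtain ⟨n, rfl⟩ := Nat.exists_eq_add_of_le' hm
  have hD := (strictMonoOn_pow_add_mul_sum_mul_pow hα₀.le hα.le n).mono
    (Set.Ioi_subset_Ici_self (a := (0 : ℝ)))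
  have hDpos : ∀ β ∈ Set.Ioi (0 : ℝ),
      0 < β ^ (n + 1) + α₀ * ∑ l ∈ range (n + 1), α ^ l * β ^ (n - l) := fun β (hβ : 0 < β) => by
    positivity
  refine ((hD.strictAntiOn_const_div hDpos (by positivity : 0 < α₀ * α ^ n)).congr
    fun β (hβ : 0 < β) => ?_).mono Set.Ioc_subset_Ioi_self
  rw [Nat.add_sub_cancel, div_div, pow_succ_mul_one_add_div_mul_sum hβ.ne']
end

section
/- For the two-node coupled fixed-point system arising from a single intermediate node (h=2): with r₁=1-ε₁ fixed and p_b of the destination equal to 0, the estimated capacity C(m) = r₁·(1 - ε₂·φ(m | r₁, ε₂, 0)) is strictly increasing in the buffer size m and converges to min(1-ε₁, 1-ε₂) as m→∞, provided ε₁≠ε₂. -/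
open Finset

theorem stmt12 (ε₁ ε₂ : ℝ) (h₁ : ε₁ ∈ Set.Ioo (0:ℝ) 1) (h₂ : ε₂ ∈ Set.Ioo (0:ℝ) 1)
    (hne : ε₁ ≠ ε₂) (C : ℕ → ℝ)
    (hC : ∀ m, C m = (1-ε₁) * (1 - ε₂ *
      (((1-ε₁) * ((1-ε₁)*ε₂)^(m-1) / (ε₁*(1-ε₂))^m) /
        (1 + ((1-ε₁)/(ε₁*(1-ε₂))) * ∑ l ∈ range m, (((1-ε₁)*ε₂)/(ε₁*(1-ε₂)))^l)))) :
    (∀ m, 1 ≤ m → C m < C (m+1)) ∧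
    Filter.Tendsto C Filter.atTop (nhds (min (1-ε₁) (1-ε₂))) := by
  obtain ⟨hε1, hε1'⟩ := h₁
  obtain ⟨hε2, hε2'⟩ := h₂
  set a : ℝ := 1 - ε₁ with ha_def
  set b : ℝ := ε₁ * (1 - ε₂) with hb_def
  have ha : 0 < a := by rw [ha_def]; linarith
  have hb : 0 < b := by rw [hb_def]; exact mul_pos hε1 (by linarith)
  set ρ : ℝ := a * ε₂ / b with hρ_def
  have hρ : 0 < ρ := div_pos (mul_pos ha hε2) hb
  have hdiff : a * ε₂ - b = ε₂ - ε₁ := by rw [ha_def, hb_def]; ring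
  have hρ1 : ρ ≠ 1 := by
    intro h
    apply hne
    rw [hρ_def] at h
    have hab : a * ε₂ = b := (div_eq_one_iff_eq hb.ne').mp h
    linarith
  have hgeom : ∀ n : ℕ, (1-ρ) * ∑ l ∈ range n, ρ^l = 1 - ρ^n := by
    intro n
    linear_combination -(geom_sum_mul ρ n)
  have hS : ∀ n : ℕ, 0 ≤ ∑ l ∈ range n, ρ^l := fun n =>
    Finset.sum_nonneg fun l _ => pow_nonneg hρ.le l
  have hD : ∀ n : ℕ, 0 < 1 + a/b * ∑ l ∈ range n, ρ^l := by
    intro n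
    have := mul_nonneg (div_nonneg ha.le hb.le) (hS n)
    linarith
  have hCk : ∀ k : ℕ, C (k+1) =
      a - a*ε₂ * ((a/b * ρ^k) / (1 + a/b * ∑ l ∈ range (k+1), ρ^l)) := by
    intro k
    rw [hC (k+1)]
    simp only [Nat.add_sub_cancel]
    have hnum : a * (a*ε₂)^k / b^(k+1) = a/b * ρ^k := by
      rw [hρ_def, div_pow]
      field_simp
      ring
    rw [hnum]
    ring
  constructor
  · intro m hm
    rcases m with _ | k
    · omega
    rw [hCk k, hCk (k+1)]
    have hSsucc : ∑ l ∈ range (k+1+1), ρ^l = (∑ l ∈ range (k+1), ρ^l) + ρ^(k+1) :=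
      Finset.sum_range_succ _ _
    rw [hSsucc]
    set S := ∑ l ∈ range (k+1), ρ^l with hS_def
    have hd1 : 0 < 1 + a/b*S := hD (k+1)
    have hd2 : 0 < 1 + a/b*(S+ρ^(k+1)) := by
      have h := hD (k+2)
      rw [hSsucc] at h
      linarith [h]
    have hX : (a/b*ρ^(k+1))/(1+a/b*(S+ρ^(k+1))) < (a/b*ρ^k)/(1+a/b*S) := by
      rw [div_lt_div_iff₀ hd2 hd1]
      have hk := hgeom (k+1)
      have h1 : (0:ℝ) < 1 - ρ + a/b := by
        have h2 : 1 - ρ + a/b = 1/ε₁ := by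
          rw [hρ_def, ha_def, hb_def]
          field_simp
          ring
        rw [h2]
        positivity
      have hpos : 0 < a/b*ρ^k*(1-ρ+a/b) := by positivity
      have key : a/b*ρ^k * (1 + a/b*(S+ρ^(k+1))) - a/b*ρ^(k+1) * (1+a/b*S)
          = a/b*ρ^k*(1-ρ+a/b) := by
        linear_combination (a/b)^2*ρ^k*hk
      linarith
    have := mul_lt_mul_of_pos_left hX (mul_pos ha hε2)
    linarith
  · rcases lt_or_gt_of_ne hρ1 with hlt | hgt
    · -- ρ < 1, ε₂ < ε₁, limit is a = 1 - ε₁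
      have hab : a * ε₂ < b := by
        rw [hρ_def] at hlt
        exact (div_lt_one hb).mp hlt
      have hee : ε₂ < ε₁ := by linarith
      rw [min_eq_left (by linarith : a ≤ 1 - ε₂)]
      rw [← Filter.tendsto_add_atTop_iff_nat 1]
      simp only [hCk]
      have hX0 : Filter.Tendsto
          (fun n => (a/b * ρ^n) / (1 + a/b * ∑ l ∈ range (n+1), ρ^l))
          Filter.atTop (nhds 0) := by
        apply squeeze_zero (g := fun n => a/b * ρ^n)
        · intro n
          exact div_nonneg (by positivity) (hD _).le
        · intro n
          apply div_le_self (by positivity)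
          have := mul_nonneg (div_nonneg ha.le hb.le) (hS (n+1))
          linarith
        · have := (tendsto_pow_atTop_nhds_zero_of_lt_one hρ.le hlt).const_mul (a/b)
          simpa using this
      have := Filter.Tendsto.sub (tendsto_const_nhds (x := a)) (hX0.const_mul (a*ε₂))
      simpa using this
    · -- ρ > 1, ε₁ < ε₂, limit is 1 - ε₂
      have hab : b < a * ε₂ := by
        rw [hρ_def] at hgt
        exact (one_lt_div hb).mp hgt
      have hee : ε₁ < ε₂ := by linarith
      rw [min_eq_right (by linarith : 1 - ε₂ ≤ a)]
      rw [← Filter.tendsto_add_atTop_iff_nat 1]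
      simp only [hCk]
      set σ : ℝ := ρ⁻¹ with hσ_def
      have hσ0 : 0 < σ := inv_pos.mpr hρ
      have hσ1 : σ < 1 := by
        rw [hσ_def]
        exact inv_lt_one_of_one_lt₀ hgt
      have hσρ : σ * ρ = 1 := inv_mul_cancel₀ hρ.ne'
      have hfact1 : ∀ k : ℕ, ρ^k * σ^(k+1) = σ := by
        intro k
        have h : ρ * σ = 1 := by rw [mul_comm]; exact hσρ
        rw [pow_succ, ← mul_assoc, ← mul_pow, h, one_pow, one_mul]
      have hfact2 : ∀ k : ℕ, σ * ρ^(k+1) = ρ^k := by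
        intro k
        rw [pow_succ', ← mul_assoc, hσρ, one_mul]
      have hu : Filter.Tendsto (fun k : ℕ => σ^(k+1)) Filter.atTop (nhds 0) :=
        (Filter.tendsto_add_atTop_iff_nat 1).mpr
          (tendsto_pow_atTop_nhds_zero_of_lt_one hσ0.le hσ1)
      have hlt1 : ∀ k : ℕ, σ^(k+1) < 1 := fun k =>
        pow_lt_one₀ hσ0.le hσ1 (Nat.succ_ne_zero k)
      have he_neg : ∀ k : ℕ, (1-ρ)*σ^(k+1) + a/b*(σ^(k+1) - 1) < 0 := by
        intro k
        have h1 : (1-ρ)*σ^(k+1) < 0 :=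
          mul_neg_of_neg_of_pos (by linarith) (by positivity)
        have h2 : a/b*(σ^(k+1)-1) < 0 :=
          mul_neg_of_pos_of_neg (by positivity) (by linarith [hlt1 k])
        linarith
      have hX : ∀ k : ℕ, (a/b*ρ^k)/(1 + a/b * ∑ l ∈ range (k+1), ρ^l)
          = (a/b*(1-ρ)*σ) / ((1-ρ)*σ^(k+1) + a/b*(σ^(k+1)-1)) := by
        intro k
        rw [div_eq_div_iff (hD (k+1)).ne' (he_neg k).ne]
        linear_combination ((a/b)*(1-ρ) + (a/b)^2) * hfact1 k
          - (a/b)^2*σ*(hgeom (k+1)) + (a/b)^2*(hfact2 k)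
      have hden : Filter.Tendsto
          (fun k : ℕ => (1-ρ)*σ^(k+1) + a/b*(σ^(k+1)-1)) Filter.atTop
          (nhds ((1-ρ)*0 + a/b*(0-1))) :=
        (hu.const_mul _).add ((hu.sub tendsto_const_nhds).const_mul _)
      have hden_ne : (1-ρ)*0 + a/b*(0-1) ≠ 0 := by
        have h0 : (1-ρ)*0 + a/b*(0-1) = -(a/b) := by ring
        rw [h0]
        exact neg_ne_zero.mpr (by positivity)
      have hXlim : Filter.Tendsto
          (fun k : ℕ => (a/b*ρ^k)/(1 + a/b * ∑ l ∈ range (k+1), ρ^l))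
          Filter.atTop
          (nhds ((a/b*(1-ρ)*σ)/((1-ρ)*0 + a/b*(0-1)))) := by
        simp only [hX]
        exact Filter.Tendsto.div tendsto_const_nhds hden hden_ne
      have hC2 : Filter.Tendsto
          (fun n : ℕ => a - a*ε₂ * ((a/b*ρ^n)/(1 + a/b * ∑ l ∈ range (n+1), ρ^l)))
          Filter.atTop
          (nhds (a - a*ε₂ * ((a/b*(1-ρ)*σ)/((1-ρ)*0 + a/b*(0-1))))) :=
        tendsto_const_nhds.sub (hXlim.const_mul _)
      have hval : a - a*ε₂ * ((a/b*(1-ρ)*σ)/((1-ρ)*0 + a/b*(0-1))) = 1 - ε₂ := by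
        have hL : (a/b*(1-ρ)*σ)/((1-ρ)*0 + a/b*(0-1)) = 1 - σ := by
          have h0 : (1-ρ)*0 + a/b*(0-1) = -(a/b) := by ring
          have hab0 : a/b ≠ 0 := by positivity
          rw [h0, div_neg]
          have h1 : a/b*(1-ρ)*σ = (a/b) * ((1-ρ)*σ) := by ring
          rw [h1, mul_div_cancel_left₀ _ hab0]
          linear_combination hσρ
        rw [hL]
        have haes : a*ε₂*σ = b := by
          rw [hσ_def, hρ_def]
          have h1 : a*ε₂ ≠ 0 := by positivity
          field_simp
        linear_combination haes - hdiff + ha_def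
      rw [← hval]
      exact hC2
end

section
/- For the two-hop line network with symmetric erasures ε₁=ε₂=ε∈(0,1), the estimated capacity with buffer size m equals (1-ε)·(1 - ε·φ(m)) where the birth-death chain has α₀=1-ε, α=(1-ε)ε, β=ε(1-ε)=α; explicitly C(m) = (1-ε)·(1 - ε/(ε + m)) = (1-ε)·m/(m+ε), which converges to 1-ε as m→∞. -/
open Finset Filter Topology

/-- The stationary probability `φ(m)` that the buffer of size `m` is full, for the birth-death
chain on `{0, …, m}` with rates `α₀` out of the empty state and `α`, `β` elsewhere. -/
noncomputable def birthDeathFullStateProb (α₀ α β : ℝ) (m : ℕ) : ℝ :=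
  α₀ * α ^ (m - 1) / β ^ m / (1 + α₀ / β * ∑ l ∈ range m, (α / β) ^ l)

lemma birthDeathFullStateProb_self (α₀ : ℝ) {β : ℝ} (hβ : β ≠ 0) {m : ℕ} (hm : 1 ≤ m) :
    birthDeathFullStateProb α₀ β β m = α₀ / β / (1 + m * (α₀ / β)) := by
  obtain ⟨k, rfl⟩ := Nat.exists_eq_add_of_le' hm
  simp only [birthDeathFullStateProb, div_self hβ, one_pow, sum_const, card_range, nsmul_eq_mul,
    mul_one, Nat.add_sub_cancel, pow_succ, mul_comm]
  field_simp

lemma birthDeathFullStateProb_symmetricErasure {ε : ℝ} (hε : ε ≠ 0) (hε' : 1 - ε ≠ 0) {m : ℕ}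
    (hm : 1 ≤ m) :
    birthDeathFullStateProb (1 - ε) ((1 - ε) * ε) (ε * (1 - ε)) m = 1 / (ε + m) := by
  rw [mul_comm (1 - ε) ε, birthDeathFullStateProb_self _ (mul_ne_zero hε hε') hm,
    div_mul_cancel_right₀ hε']
  field_simp

theorem stmt13 (ε : ℝ) (hε : ε ∈ Set.Ioo (0:ℝ) 1) (C : ℕ → ℝ)
    (hC : ∀ m, C m = (1-ε) * (1 - ε *
      (((1-ε) * ((1-ε)*ε)^(m-1) / (ε*(1-ε))^m) /
        (1 + ((1-ε)/(ε*(1-ε))) * ∑ l ∈ range m, (((1-ε)*ε)/(ε*(1-ε)))^l)))) :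
    (∀ m : ℕ, 1 ≤ m → C m = (1-ε) * m / (m+ε)) ∧
    Filter.Tendsto C Filter.atTop (nhds (1-ε)) := by
  obtain ⟨hε0, hε1⟩ := hε
  have hformula (m : ℕ) (hm : 1 ≤ m) : C m = (1 - ε) * m / (m + ε) := by
    rw [hC, ← birthDeathFullStateProb,
      birthDeathFullStateProb_symmetricErasure hε0.ne' (sub_ne_zero.2 hε1.ne') hm]
    field_simp
    ring
  refine ⟨hformula, ?_⟩
  have hlim := (tendsto_natCast_div_add_atTop ε).const_mul (1 - ε)
  rw [mul_one] at hlim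
  refine hlim.congr' ?_
  filter_upwards [eventually_ge_atTop 1] with m hm
  rw [hformula m hm, mul_div_assoc]
end
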